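/- arXiv:2605.00489 — 7 statements merged into one kernel-verified Lean document; each statement's English description precedes it below -/
import Mathlib

section
/- If r ≥ 0, c ≥ 0 and x is a real number with |x − r| ≤ 4·√r·c + 4·c², then |√r − √(x + 8c²)| ≤ 4c. -/
/-- If `r ≥ 0`, `c ≥ 0` and `|x − r| ≤ 4√r·c + 4c²`, then
`|√r − √(x + 8c²)| ≤ 4c`. -/
theorem abs_sqrt_sub_sqrt_le
    (r c x : ℝ) (hr : 0 ≤ r) (hc : 0 ≤ c)
    (h : |x - r| ≤ 4 * Real.sqrt r * c + 4 * c ^ 2) :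
    |Real.sqrt r - Real.sqrt (x + 8 * c ^ 2)| ≤ 4 * c := by
  set s := Real.sqrt r with hs_def
  have hs : 0 ≤ s := Real.sqrt_nonneg r
  have hsq : s ^ 2 = r := Real.sq_sqrt hr
  obtain ⟨h1, h2⟩ := abs_le.mp h
  have low : (s - 2 * c) ^ 2 ≤ x + 8 * c ^ 2 := by nlinarith
  have high : x + 8 * c ^ 2 ≤ (s + 4 * c) ^ 2 := by nlinarith
  have hup : Real.sqrt (x + 8 * c ^ 2) ≤ s + 4 * c := by
    calc Real.sqrt (x + 8 * c ^ 2) ≤ Real.sqrt ((s + 4 * c) ^ 2) :=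
          Real.sqrt_le_sqrt high
      _ = s + 4 * c := by rw [Real.sqrt_sq (by positivity)]
  have hlo : s - 2 * c ≤ Real.sqrt (x + 8 * c ^ 2) := by
    have := Real.sqrt_le_sqrt low
    rw [Real.sqrt_sq_eq_abs] at this
    exact (le_abs_self _).trans this
  rw [abs_le]
  constructor <;> linarith
end

section
/- Concentration of the empirical standard-deviation proxy: Let ι be a finite nonempty index set, let r : ι → ℝ with r(k) ≥ 0 for all k, let x : ι → ℝ, and let c ≥ 0. If |x(k) − r(k)| ≤ 4·√(r(k))·c + 4·c² for every k ∈ ι, then |max_{k∈ι} √(x(k) + 8c²) − √(max_{k∈ι} r(k))| ≤ 4c. -/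
/-- **Concentration of the empirical standard-deviation proxy.**
If `|x k − r k| ≤ 4√(r k)·c + 4c²` for every `k`, then
`|max_k √(x k + 8c²) − √(max_k r k)| ≤ 4c`. -/
theorem abs_sup_sqrt_sub_sqrt_sup_le
    {ι : Type*} [Fintype ι] [Nonempty ι]
    (r x : ι → ℝ) (hr : ∀ k, 0 ≤ r k) (c : ℝ) (hc : 0 ≤ c)
    (h : ∀ k, |x k - r k| ≤ 4 * Real.sqrt (r k) * c + 4 * c ^ 2) :
    |Finset.univ.sup' Finset.univ_nonempty (fun k => Real.sqrt (x k + 8 * c ^ 2))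
        - Real.sqrt (Finset.univ.sup' Finset.univ_nonempty r)| ≤ 4 * c := by
  have hpt : ∀ k, |Real.sqrt (x k + 8 * c ^ 2) - Real.sqrt (r k)| ≤ 4 * c := by
    intro k
    have hk := abs_le.mp (h k)
    have hs : 0 ≤ Real.sqrt (r k) := Real.sqrt_nonneg _
    have hsq : Real.sqrt (r k) ^ 2 = r k := Real.sq_sqrt (hr k)
    rw [abs_le]
    constructor
    · have h1 : (Real.sqrt (r k) - 2 * c) ^ 2 ≤ x k + 8 * c ^ 2 := by nlinarith [hk.1]
      have h2 : |Real.sqrt (r k) - 2 * c| ≤ Real.sqrt (x k + 8 * c ^ 2) := by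
        rw [← Real.sqrt_sq_eq_abs]; exact Real.sqrt_le_sqrt h1
      have h3 : Real.sqrt (r k) - 2 * c ≤ Real.sqrt (x k + 8 * c ^ 2) :=
        le_trans (le_abs_self _) h2
      linarith
    · have h1 : x k + 8 * c ^ 2 ≤ (Real.sqrt (r k) + 4 * c) ^ 2 := by nlinarith [hk.2]
      have h2 : Real.sqrt (x k + 8 * c ^ 2) ≤ Real.sqrt (r k) + 4 * c := by
        rw [← Real.sqrt_sq (by positivity : (0:ℝ) ≤ Real.sqrt (r k) + 4 * c)]
        exact Real.sqrt_le_sqrt h1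
      linarith
  obtain ⟨k₀, -, hk₀⟩ := Finset.exists_mem_eq_sup' Finset.univ_nonempty r
  rw [abs_le]
  constructor
  · have h2 : Real.sqrt (x k₀ + 8 * c ^ 2) ≤
        Finset.univ.sup' Finset.univ_nonempty (fun k => Real.sqrt (x k + 8 * c ^ 2)) :=
      Finset.le_sup' (fun k => Real.sqrt (x k + 8 * c ^ 2)) (Finset.mem_univ k₀)
    have h3 := (abs_le.mp (hpt k₀)).1
    rw [hk₀]; linarith
  · rw [sub_le_iff_le_add]
    apply Finset.sup'_le
    intro k _
    have h3 := (abs_le.mp (hpt k)).2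
    have h4 : Real.sqrt (r k) ≤ Real.sqrt (Finset.univ.sup' Finset.univ_nonempty r) :=
      Real.sqrt_le_sqrt (Finset.le_sup' r (Finset.mem_univ k))
    linarith
end

section
/- Concentration of empirical gaps: Let ι be a finite nonempty index set, let r : ι → ℝ with r(k) ≥ 0 for all k, let x : ι → ℝ, and let c ≥ 0. If |x(k) − r(k)| ≤ 4·√(r(k))·c + 4·c² for every k ∈ ι, then for every k ∈ ι, |(max_{k'∈ι} x(k') − x(k)) − (max_{k'∈ι} r(k') − r(k))| ≤ 8·√(max_{k'∈ι} r(k'))·c + 8·c². -/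
/-- **Concentration of empirical gaps.**
If `|x k − r k| ≤ 4√(r k)·c + 4c²` for every `k`, then for every `k`,
`|(max_{k'} x k' − x k) − (max_{k'} r k' − r k)| ≤ 8√(max_{k'} r k')·c + 8c²`. -/
theorem abs_gap_sub_gap_le
    {ι : Type*} [Fintype ι] [Nonempty ι]
    (r x : ι → ℝ) (hr : ∀ k, 0 ≤ r k) (c : ℝ) (hc : 0 ≤ c)
    (h : ∀ k, |x k - r k| ≤ 4 * Real.sqrt (r k) * c + 4 * c ^ 2) :
    ∀ k, |(Finset.univ.sup' Finset.univ_nonempty x - x k)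
            - (Finset.univ.sup' Finset.univ_nonempty r - r k)|
          ≤ 8 * Real.sqrt (Finset.univ.sup' Finset.univ_nonempty r) * c + 8 * c ^ 2 := by
  intro k
  set R := Finset.univ.sup' Finset.univ_nonempty r with hR
  set X := Finset.univ.sup' Finset.univ_nonempty x with hX
  set B := 4 * Real.sqrt R * c + 4 * c ^ 2 with hB
  have hsq : ∀ j, Real.sqrt (r j) ≤ Real.sqrt R := fun j =>
    Real.sqrt_le_sqrt (Finset.le_sup' r (Finset.mem_univ j))
  have hb : ∀ j, |x j - r j| ≤ B := fun j =>
    (h j).trans (by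
      have := hsq j
      nlinarith)
  have h1 : X ≤ R + B := by
    apply Finset.sup'_le
    intro j _
    have := abs_le.1 (hb j)
    have : r j ≤ R := Finset.le_sup' r (Finset.mem_univ j)
    have := abs_le.1 (hb j)
    linarith [Finset.le_sup' r (Finset.mem_univ j), (abs_le.1 (hb j)).2]
  have h2 : R ≤ X + B := by
    apply Finset.sup'_le
    intro j _
    linarith [Finset.le_sup' x (Finset.mem_univ j), (abs_le.1 (hb j)).1]
  have h3 := abs_le.1 (hb k)
  rw [abs_le]
  constructor <;> nlinarith [h3.1, h3.2]
end

section
/- Concentration of empirical gaps with an estimated standard deviation: Let ι be a finite nonempty index set, let r : ι → ℝ with r(k) ≥ 0 for all k, let x : ι → ℝ, let c ≥ 0, and let σ ≥ 0 be a real number with |σ − √(max_{k'∈ι} r(k'))| ≤ 4c. If |x(k) − r(k)| ≤ 4·√(r(k))·c + 4·c² for every k ∈ ι, then for every k ∈ ι, |(max_{k'∈ι} x(k') − x(k)) − (max_{k'∈ι} r(k') − r(k))| ≤ 8·σ·c + 40·c². -/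
/-- **Concentration of empirical gaps with an estimated standard deviation.**
If moreover `σ ≥ 0` satisfies `|σ − √(max_{k'} r k')| ≤ 4c`, then for every `k`,
`|(max_{k'} x k' − x k) − (max_{k'} r k' − r k)| ≤ 8σc + 40c²`. -/
theorem abs_gap_sub_gap_le_of_sigma
    {ι : Type*} [Fintype ι] [Nonempty ι]
    (r x : ι → ℝ) (hr : ∀ k, 0 ≤ r k) (c : ℝ) (hc : 0 ≤ c)
    (σ : ℝ) (hσ0 : 0 ≤ σ)
    (hσ : |σ - Real.sqrt (Finset.univ.sup' Finset.univ_nonempty r)| ≤ 4 * c)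
    (h : ∀ k, |x k - r k| ≤ 4 * Real.sqrt (r k) * c + 4 * c ^ 2) :
    ∀ k, |(Finset.univ.sup' Finset.univ_nonempty x - x k)
            - (Finset.univ.sup' Finset.univ_nonempty r - r k)|
          ≤ 8 * σ * c + 40 * c ^ 2 := by
  intro k
  set M := Finset.univ.sup' Finset.univ_nonempty r with hM
  set S := Finset.univ.sup' Finset.univ_nonempty x with hS
  have hMr : ∀ j, r j ≤ M := fun j => Finset.le_sup' r (Finset.mem_univ j)
  have hsqM : Real.sqrt M ≤ σ + 4 * c := by
    have := (abs_le.mp hσ).1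
    linarith
  have key : ∀ j, |x j - r j| ≤ 4 * σ * c + 20 * c ^ 2 := by
    intro j
    have h1 : Real.sqrt (r j) ≤ Real.sqrt M := Real.sqrt_le_sqrt (hMr j)
    have h2 := h j
    nlinarith [Real.sqrt_nonneg (r j)]
  have hB : 0 ≤ 4 * σ * c + 20 * c ^ 2 := by positivity
  have hSM : |S - M| ≤ 4 * σ * c + 20 * c ^ 2 := by
    rw [abs_le]
    constructor
    · obtain ⟨j, _, hj⟩ := Finset.exists_mem_eq_sup' Finset.univ_nonempty r
      have hxj : x j ≤ S := Finset.le_sup' x (Finset.mem_univ j)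
      have := abs_le.mp (key j)
      rw [← hM] at hj
      linarith [this.1]
    · have : S ≤ M + (4 * σ * c + 20 * c ^ 2) := by
        apply Finset.sup'_le
        intro j _
        have := abs_le.mp (key j)
        linarith [hMr j, this.2]
      linarith
  have hk := abs_le.mp (key k)
  have hSM' := abs_le.mp hSM
  rw [abs_le]
  constructor <;> nlinarith [hSM'.1, hSM'.2, hk.1, hk.2]
end

section
/- The kept set of the global exploration phase contains every most influenced node: Let ι be a finite nonempty index set, let r : ι → ℝ with r(k) ≥ 0 for all k, let x : ι → ℝ, let c ≥ 0, and let σ ≥ 0 with |σ − √(max_{k'∈ι} r(k'))| ≤ 4c. Assume |x(k) − r(k)| ≤ 4·√(r(k))·c + 4·c² for every k ∈ ι. Then every index k with r(k) = max_{k'∈ι} r(k') satisfies max_{k'∈ι} x(k') − x(k) ≤ 8·σ·c + 40·c². -/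
/-- **The kept set of the global exploration phase contains every most influenced node.**
Under the concentration hypotheses, every index `k` achieving the maximum of `r`
has empirical gap at most `8σc + 40c²`. -/
theorem max_node_kept
    {ι : Type*} [Fintype ι] [Nonempty ι]
    (r x : ι → ℝ) (hr : ∀ k, 0 ≤ r k) (c : ℝ) (hc : 0 ≤ c)
    (σ : ℝ) (hσ0 : 0 ≤ σ)
    (hσ : |σ - Real.sqrt (Finset.univ.sup' Finset.univ_nonempty r)| ≤ 4 * c)
    (h : ∀ k, |x k - r k| ≤ 4 * Real.sqrt (r k) * c + 4 * c ^ 2) :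
    ∀ k, r k = Finset.univ.sup' Finset.univ_nonempty r →
      Finset.univ.sup' Finset.univ_nonempty x - x k ≤ 8 * σ * c + 40 * c ^ 2 := by
  intro k hk
  set M := Finset.univ.sup' Finset.univ_nonempty r with hM
  have hsM : Real.sqrt M ≤ σ + 4 * c := by
    have := abs_le.1 hσ
    linarith [this.2]
  have hxk : M - (4 * Real.sqrt M * c + 4 * c ^ 2) ≤ x k := by
    have := (abs_le.1 (h k)).1
    rw [hk] at this
    linarith
  have hsup : Finset.univ.sup' Finset.univ_nonempty x
      ≤ M + (4 * Real.sqrt M * c + 4 * c ^ 2) := by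
    apply Finset.sup'_le
    intro j _
    have h1 := (abs_le.1 (h j)).2
    have h2 : r j ≤ M := Finset.le_sup' r (Finset.mem_univ j)
    have h3 : Real.sqrt (r j) ≤ Real.sqrt M := Real.sqrt_le_sqrt h2
    nlinarith [Real.sqrt_nonneg (r j)]
  have hsq : 0 ≤ Real.sqrt M := Real.sqrt_nonneg M
  nlinarith
end

section
/- The kept set of the global exploration phase is contained in the set of nodes with small true gap: Let ι be a finite nonempty index set, let r : ι → ℝ with r(k) ≥ 0 for all k, let x : ι → ℝ, let c ≥ 0, and let σ ≥ 0 with |σ − √(max_{k'∈ι} r(k'))| ≤ 4c. Assume |x(k) − r(k)| ≤ 4·√(r(k))·c + 4·c² for every k ∈ ι. Then every index k with max_{k'∈ι} x(k') − x(k) ≤ 8·σ·c + 40·c² satisfies max_{k'∈ι} r(k') − r(k) ≤ 16·√(max_{k'∈ι} r(k'))·c + 144·c². In particular, the cardinality of {k ∈ ι : max_{k'} x(k') − x(k) ≤ 8σc + 40c²} is at most the cardinality of {k ∈ ι : max_{k'} r(k') − r(k) ≤ 16·√(max_{k'} r(k'))·c + 144·c²}. -/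
/-- **The kept set of the global exploration phase is contained in the set of nodes with
small true gap.** Every index `k` with empirical gap at most `8σc + 40c²` has true gap at
most `16√(max r)·c + 144c²`; in particular the kept set has at most as many elements as
the set of nodes with small true gap. -/
theorem kept_set_subset_small_gap
    {ι : Type*} [Fintype ι] [Nonempty ι]
    (r x : ι → ℝ) (hr : ∀ k, 0 ≤ r k) (c : ℝ) (hc : 0 ≤ c)
    (σ : ℝ) (hσ0 : 0 ≤ σ)
    (hσ : |σ - Real.sqrt (Finset.univ.sup' Finset.univ_nonempty r)| ≤ 4 * c)
    (h : ∀ k, |x k - r k| ≤ 4 * Real.sqrt (r k) * c + 4 * c ^ 2) :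
    (∀ k, Finset.univ.sup' Finset.univ_nonempty x - x k ≤ 8 * σ * c + 40 * c ^ 2 →
        Finset.univ.sup' Finset.univ_nonempty r - r k
          ≤ 16 * Real.sqrt (Finset.univ.sup' Finset.univ_nonempty r) * c + 144 * c ^ 2) ∧
      ({k | Finset.univ.sup' Finset.univ_nonempty x - x k ≤ 8 * σ * c + 40 * c ^ 2} :
          Set ι).ncard
        ≤ ({k | Finset.univ.sup' Finset.univ_nonempty r - r k
              ≤ 16 * Real.sqrt (Finset.univ.sup' Finset.univ_nonempty r) * c + 144 * c ^ 2} :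
            Set ι).ncard := by
  set M := Finset.univ.sup' Finset.univ_nonempty r with hMdef
  obtain ⟨k0, -, hk0⟩ := Finset.exists_mem_eq_sup' Finset.univ_nonempty r
  have key : ∀ k, Finset.univ.sup' Finset.univ_nonempty x - x k ≤ 8 * σ * c + 40 * c ^ 2 →
      M - r k ≤ 16 * Real.sqrt M * c + 144 * c ^ 2 := by
    intro k hk
    have h1 := (abs_le.1 (h k)).2
    have h2 := (abs_le.1 (h k0)).1
    have hMx : x k0 ≤ Finset.univ.sup' Finset.univ_nonempty x :=
      Finset.le_sup' x (Finset.mem_univ k0)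
    have hsk : Real.sqrt (r k) ≤ Real.sqrt M :=
      Real.sqrt_le_sqrt (Finset.le_sup' r (Finset.mem_univ k))
    have hσle : σ ≤ Real.sqrt M + 4 * c := by
      have := (abs_le.1 hσ).2; linarith
    have hσc : σ * c ≤ Real.sqrt M * c + 4 * c ^ 2 := by
      have := mul_le_mul_of_nonneg_right hσle hc; nlinarith [this]
    have hskc : Real.sqrt (r k) * c ≤ Real.sqrt M * c := mul_le_mul_of_nonneg_right hsk hc
    have hc2 : 0 ≤ c ^ 2 := sq_nonneg c
    have hrk0 : r k0 = M := hk0.symm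
    rw [hrk0] at h2
    linarith [hk, h1, h2, hMx]
  refine ⟨key, Set.ncard_le_ncard (fun k hk => key k hk) (Set.toFinite _)⟩
end

section
/- Asymptotic behavior of the detectable dimension (Remark 2): Let ι be a finite nonempty index set with d ≥ 1 elements, let r° : ι → ℝ with r°(k) ≥ 0 for all k, and assume r_⋆° := max_{k∈ι} r°(k) > 0. For Δ ∈ ℝ define D(Δ) = |{k ∈ ι : r_⋆° − r°(k) ≤ Δ}|. For integers n ≥ 2 and T ≥ 2 define Δ_n(T) = 16·√(r_⋆°·d·log(n·d)/T) + 144·d·log(n·d)/T. Then: (i) for all sufficiently large n there exists an integer T with 2 ≤ T ≤ n such that T·r_⋆° ≥ √(D(Δ_n(T))·n·r_⋆°); letting T_⋆(n) be the smallest such T and D_⋆(n) = D(Δ_n(T_⋆(n))); (ii) for all sufficiently large n, D_⋆(n) = D(0) = |{k ∈ ι : r°(k) = r_⋆°}|, the number of most influenced nodes. -/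
open Filter Real Asymptotics

/-- The maximal dual influence `r_⋆° = max_k r°(k)`. -/
noncomputable def maxDual {ι : Type*} [Fintype ι] [Nonempty ι] (rdual : ι → ℝ) : ℝ :=
  Finset.univ.sup' Finset.univ_nonempty rdual

/-- The gap-counting function `D(Δ) = |{k : r_⋆° − r°(k) ≤ Δ}|`. -/
noncomputable def gapCount {ι : Type*} [Fintype ι] [Nonempty ι]
    (rdual : ι → ℝ) (Δ : ℝ) : ℕ :=
  ({k | maxDual rdual - rdual k ≤ Δ} : Set ι).ncard

/-- The detectable-gap quantity
`Δ_n(T) = 16√(r_⋆°·d·log(nd)/T) + 144·d·log(nd)/T`. -/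
noncomputable def detectGap {ι : Type*} [Fintype ι] [Nonempty ι]
    (rdual : ι → ℝ) (d n T : ℕ) : ℝ :=
  16 * Real.sqrt (maxDual rdual * d * Real.log (n * d) / T)
    + 144 * d * Real.log (n * d) / T

/-- auxiliary sequence `log(nd)/√n`. -/
noncomputable def auxU (d n : ℕ) : ℝ := Real.log (n * d) / Real.sqrt n

/-- auxiliary dominating function. -/
noncomputable def auxF (M : ℝ) (d : ℕ) (x : ℝ) : ℝ :=
  16 * Real.sqrt (M * d * (x * Real.sqrt M)) + 144 * d * (x * Real.sqrt M)

lemma auxU_tendsto (d : ℕ) (hd : 1 ≤ d) :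
    Tendsto (fun n : ℕ => auxU d n) atTop (nhds 0) := by
  have hdR : (0:ℝ) < d := by exact_mod_cast hd
  have h1 : Tendsto (fun x : ℝ => Real.log x / Real.sqrt x) atTop (nhds 0) := by
    have h := (isLittleO_log_rpow_atTop (by norm_num : (0:ℝ) < 1/2)).tendsto_div_nhds_zero
    refine h.congr' ?_
    filter_upwards [eventually_ge_atTop (0:ℝ)] with x hx
    rw [Real.sqrt_eq_rpow]
  have h2 : Tendsto (fun x : ℝ => Real.log d / Real.sqrt x) atTop (nhds 0) := by
    have hs : Tendsto Real.sqrt atTop atTop := by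
      refine (tendsto_rpow_atTop (by norm_num : (0:ℝ) < 1/2)).congr' ?_
      filter_upwards [eventually_ge_atTop (0:ℝ)] with x hx
      rw [Real.sqrt_eq_rpow]
    have := (tendsto_inv_atTop_zero.comp hs).const_mul (Real.log d)
    simpa [div_eq_mul_inv, Function.comp] using this
  have h3 := h1.add h2
  rw [add_zero] at h3
  have hv : Tendsto (fun x : ℝ => Real.log (x * d) / Real.sqrt x) atTop (nhds 0) := by
    refine Tendsto.congr' ?_ h3
    filter_upwards [eventually_ge_atTop (1:ℝ)] with x hx
    rw [Real.log_mul (by linarith) (ne_of_gt hdR), add_div]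
  exact hv.comp tendsto_natCast_atTop_atTop

/-- **Asymptotic behavior of the detectable dimension (Remark 2).**
For all sufficiently large `n`: (i) there exists an integer `2 ≤ T ≤ n` with
`T·r_⋆° ≥ √(D(Δ_n(T))·n·r_⋆°)`; and (ii) for the smallest such `T = T_⋆(n)`, the
detectable dimension `D_⋆(n) = D(Δ_n(T_⋆(n)))` equals `D(0)`, the number of most
influenced nodes. -/
theorem detectable_dimension_asymptotics
    {ι : Type*} [Fintype ι] [Nonempty ι]
    (d : ℕ) (hd : 1 ≤ d) (hcard : Fintype.card ι = d)
    (rdual : ι → ℝ) (hr0 : ∀ k, 0 ≤ rdual k)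
    (hpos : 0 < maxDual rdual) :
    ∃ N : ℕ, 2 ≤ N ∧ ∀ n : ℕ, N ≤ n →
      (∃ T : ℕ, 2 ≤ T ∧ T ≤ n ∧
        Real.sqrt ((gapCount rdual (detectGap rdual d n T) : ℝ) * n * maxDual rdual)
          ≤ (T : ℝ) * maxDual rdual) ∧
      ∀ Tstar : ℕ,
        IsLeast {T : ℕ | 2 ≤ T ∧ T ≤ n ∧
            Real.sqrt ((gapCount rdual (detectGap rdual d n T) : ℝ) * n * maxDual rdual)
              ≤ (T : ℝ) * maxDual rdual} Tstar →
          gapCount rdual (detectGap rdual d n Tstar)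
              = ({k | rdual k = maxDual rdual} : Set ι).ncard ∧
            gapCount rdual (detectGap rdual d n Tstar) = gapCount rdual 0 := by
  classical
  have hle : ∀ k, rdual k ≤ maxDual rdual := fun k => Finset.le_sup' rdual (Finset.mem_univ k)
  obtain ⟨kmax, -, hkmax0⟩ := Finset.exists_mem_eq_sup' Finset.univ_nonempty rdual
  have hkmax : maxDual rdual = rdual kmax := hkmax0
  have hdR : (1:ℝ) ≤ d := by exact_mod_cast hd
  set M := maxDual rdual with hMdef
  -- minimal positive gap ε
  obtain ⟨ε, hε, hεle⟩ : ∃ ε : ℝ, 0 < ε ∧ ∀ k, rdual k < M → ε ≤ M - rdual k := by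
    by_cases hS : (Finset.univ.filter (fun k => rdual k < M)).Nonempty
    · refine ⟨(Finset.univ.filter (fun k => rdual k < M)).inf' hS (fun k => M - rdual k), ?_, ?_⟩
      · rw [Finset.lt_inf'_iff]
        intro k hk
        simp only [Finset.mem_filter] at hk
        linarith [hk.2]
      · intro k hk
        exact Finset.inf'_le _ (by simp [hk])
    · exact ⟨1, one_pos, fun k hk => absurd ⟨k, by simp [hk]⟩ hS⟩
  have hset : ∀ Δ : ℝ, 0 ≤ Δ → Δ < ε →
      ({k | M - rdual k ≤ Δ} : Set ι) = {k | rdual k = M} := by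
    intro Δ h0 hΔ
    ext k
    simp only [Set.mem_setOf_eq]
    constructor
    · intro h
      by_contra hne
      have hlt : rdual k < M := lt_of_le_of_ne (hle k) hne
      have := hεle k hlt
      linarith
    · intro h
      rw [h]
      simpa using h0
  have hgap0 : gapCount rdual 0 = ({k | rdual k = M} : Set ι).ncard := by
    rw [gapCount, ← hMdef, hset 0 le_rfl hε]
  -- the eventual bound
  have hfc : Continuous (auxF M d) := by
    unfold auxF
    fun_prop
  have hf0 : auxF M d 0 = 0 := by simp [auxF]
  have hfu : Tendsto (fun n : ℕ => auxF M d (auxU d n)) atTop (nhds 0) := by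
    have := (hfc.tendsto 0).comp (auxU_tendsto d hd)
    rwa [hf0] at this
  have hE2 : ∀ᶠ n : ℕ in atTop, auxF M d (auxU d n) < ε := hfu.eventually_lt_const hε
  have hE1 : ∀ᶠ n : ℕ in atTop, (d:ℝ) ≤ (n:ℝ) * M := by
    have : Tendsto (fun n : ℕ => (n:ℝ) * M) atTop atTop :=
      tendsto_natCast_atTop_atTop.atTop_mul_const hpos
    exact this.eventually_ge_atTop _
  have hEV : ∀ᶠ n : ℕ in atTop, 2 ≤ n ∧ (d:ℝ) ≤ (n:ℝ) * M ∧ auxF M d (auxU d n) < ε := by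
    filter_upwards [eventually_ge_atTop 2, hE1, hE2] with n h1 h2 h3
    exact ⟨h1, h2, h3⟩
  obtain ⟨N, hN⟩ := eventually_atTop.mp hEV
  refine ⟨max N 2, le_max_right _ _, ?_⟩
  intro n hn
  obtain ⟨hn2, hdn, hfn⟩ := hN n (le_trans (le_max_left _ _) hn)
  have hnR : (2:ℝ) ≤ (n:ℝ) := by exact_mod_cast hn2
  have hlognn : 0 ≤ Real.log ((n:ℝ) * (d:ℝ)) := Real.log_nonneg (by nlinarith)
  have hΔnn : ∀ T : ℕ, 0 ≤ detectGap rdual d n T := by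
    intro T
    rw [detectGap, ← hMdef]
    have h1 : 0 ≤ Real.sqrt (M * d * Real.log ((n:ℝ) * d) / T) := Real.sqrt_nonneg _
    have h2 : 0 ≤ 144 * (d:ℝ) * Real.log ((n:ℝ) * d) / T :=
      div_nonneg (mul_nonneg (by positivity) hlognn) (Nat.cast_nonneg T)
    linarith
  constructor
  · -- existence: T = n works
    refine ⟨n, hn2, le_refl n, ?_⟩
    have hDled : ((gapCount rdual (detectGap rdual d n n) : ℕ) : ℝ) ≤ d := by
      have h1 : gapCount rdual (detectGap rdual d n n) ≤ d := by
        rw [gapCount]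
        calc ({k | maxDual rdual - rdual k ≤ detectGap rdual d n n} : Set ι).ncard
            ≤ (Set.univ : Set ι).ncard :=
              Set.ncard_le_ncard (Set.subset_univ _) Set.finite_univ
          _ = d := by rw [Set.ncard_univ, Nat.card_eq_fintype_card, hcard]
      exact_mod_cast h1
    have hnM : (0:ℝ) ≤ (n:ℝ) * M := by positivity
    have key : ((gapCount rdual (detectGap rdual d n n) : ℕ) : ℝ) * n * M
        ≤ ((n:ℝ) * M) * ((n:ℝ) * M) := by
      have h1 := mul_le_mul_of_nonneg_right hDled hnM
      have h2 := mul_le_mul_of_nonneg_right hdn hnM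
      nlinarith
    calc Real.sqrt (((gapCount rdual (detectGap rdual d n n) : ℕ) : ℝ) * n * M)
        ≤ Real.sqrt (((n:ℝ) * M) * ((n:ℝ) * M)) := Real.sqrt_le_sqrt key
      _ = (n:ℝ) * M := Real.sqrt_mul_self hnM
  · -- minimality part
    intro Tstar hTs
    obtain ⟨hT2, hTn, hsq⟩ := hTs.1
    have hTposR : (0:ℝ) < (Tstar:ℝ) := by
      have : (2:ℝ) ≤ (Tstar:ℝ) := by exact_mod_cast hT2
      linarith
    set Δ := detectGap rdual d n Tstar with hΔdef
    have hΔ0 : 0 ≤ Δ := hΔnn Tstar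
    have hD1 : 1 ≤ gapCount rdual Δ := by
      rw [gapCount, ← hMdef]
      have hne : ({k | M - rdual k ≤ Δ} : Set ι).Nonempty := by
        refine ⟨kmax, ?_⟩
        simp only [Set.mem_setOf_eq]
        rw [hkmax] at *
        simpa using hΔ0
      exact (Set.ncard_pos (Set.toFinite _)).2 hne
    have hsM : 0 < Real.sqrt M := Real.sqrt_pos.2 hpos
    have hsn : 0 < Real.sqrt (n:ℝ) := Real.sqrt_pos.2 (by linarith)
    have hstep : Real.sqrt ((n:ℝ) * M) ≤ (Tstar:ℝ) * M := by
      refine le_trans (Real.sqrt_le_sqrt ?_) hsq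
      have h1 : (1:ℝ) ≤ ((gapCount rdual Δ : ℕ) : ℝ) := by exact_mod_cast hD1
      calc (n:ℝ) * M = 1 * ((n:ℝ) * M) := by ring
        _ ≤ ((gapCount rdual Δ : ℕ) : ℝ) * ((n:ℝ) * M) :=
            mul_le_mul_of_nonneg_right h1 (by positivity)
        _ = ((gapCount rdual Δ : ℕ) : ℝ) * n * M := by ring
    have hTlb : Real.sqrt (n:ℝ) / Real.sqrt M ≤ (Tstar:ℝ) := by
      rw [div_le_iff₀ hsM]
      have h1 : Real.sqrt (n:ℝ) * Real.sqrt M ≤ (Tstar:ℝ) * M := by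
        rw [← Real.sqrt_mul (by linarith) M]
        exact hstep
      have hMeq : M = Real.sqrt M * Real.sqrt M := (Real.mul_self_sqrt hpos.le).symm
      have h2 : Real.sqrt (n:ℝ) * Real.sqrt M ≤ ((Tstar:ℝ) * Real.sqrt M) * Real.sqrt M := by
        rw [mul_assoc, ← hMeq]
        exact h1
      exact le_of_mul_le_mul_right h2 hsM
    have hlogT : Real.log ((n:ℝ) * (d:ℝ)) / (Tstar:ℝ) ≤ auxU d n * Real.sqrt M := by
      have hc : 0 < Real.sqrt (n:ℝ) / Real.sqrt M := by positivity
      have h1 := div_le_div_of_nonneg_left hlognn hc hTlb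
      calc Real.log ((n:ℝ) * (d:ℝ)) / (Tstar:ℝ)
          ≤ Real.log ((n:ℝ) * (d:ℝ)) / (Real.sqrt (n:ℝ) / Real.sqrt M) := h1
        _ = auxU d n * Real.sqrt M := by
            rw [auxU, div_div_eq_mul_div, mul_div_right_comm]
    have hΔle : Δ ≤ auxF M d (auxU d n) := by
      rw [hΔdef, detectGap, ← hMdef, auxF, mul_div_assoc, mul_div_assoc]
      gcongr <;> first | positivity | exact hlogT
    have hΔε : Δ < ε := lt_of_le_of_lt hΔle hfn
    have hkey : gapCount rdual Δ = ({k | rdual k = M} : Set ι).ncard := by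
      rw [gapCount, ← hMdef, hset Δ hΔ0 hΔε]
    exact ⟨hkey, hkey.trans hgap0.symm⟩
end
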